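/- arXiv:2101.10941 — 2 statements merged into one kernel-verified Lean document; each statement's English description precedes it below -/
import Mathlib

section
/- Let W and T be real-valued random variables on a probability space (Ω, 𝓕, P) such that W is integrable, W is independent of T, and E[W] = 0. Then E[W · 1{W ≥ T}] ≥ 0 and E[W · 1{W ≤ T}] ≤ 0. -/
/-!
The indicator `1{T ≤ W} - 1{T ≤ 0}` has the sign of `W`, so `W · 1{T ≤ W} ≥ W · 1{T ≤ 0}`
pointwise; by independence `E[W · 1{T ≤ 0}] = E[W] · P(T ≤ 0) = 0`. The other inequality is
the mirror image, comparing `1{W ≤ T}` with `1{0 ≤ T}`.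
-/

open MeasureTheory ProbabilityTheory

section

variable {Ω : Type*} [MeasurableSpace Ω] {μ : Measure Ω}

lemma ProbabilityTheory.IndepFun.setIntegral_preimage_eq_mul_measureReal {W T : Ω → ℝ}
    (hWT : IndepFun W T μ) (hW : AEStronglyMeasurable W μ) (hT : Measurable T)
    {B : Set ℝ} (hB : MeasurableSet B) :
    ∫ ω in T ⁻¹' B, W ω ∂μ = (∫ ω, W ω ∂μ) * μ.real (T ⁻¹' B) := by
  have hsT : MeasurableSet (T ⁻¹' B) := hT hB
  have hcomp : (T ⁻¹' B).indicator (1 : Ω → ℝ) = B.indicator 1 ∘ T := by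
    ext ω
    by_cases h : T ω ∈ B <;> simp [h]
  have hind : IndepFun W ((T ⁻¹' B).indicator 1) μ :=
    hcomp ▸ hWT.comp measurable_id (measurable_one.indicator hB)
  have hpoint : (T ⁻¹' B).indicator W = W * (T ⁻¹' B).indicator 1 := by
    ext ω
    by_cases h : T ω ∈ B <;> simp [h]
  rw [← integral_indicator hsT, hpoint,
    hind.integral_mul_eq_mul_integral hW (measurable_one.indicator hsT).aestronglyMeasurable,
    integral_indicator_one hsT]

lemma setIntegral_le_setIntegral_of_indicator_le {f : Ω → ℝ} {s t : Set Ω} (hf : Integrable f μ)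
    (hs : NullMeasurableSet s μ) (ht : NullMeasurableSet t μ)
    (h : ∀ ω, s.indicator f ω ≤ t.indicator f ω) :
    ∫ ω in s, f ω ∂μ ≤ ∫ ω in t, f ω ∂μ := by
  rw [← integral_indicator₀ hs, ← integral_indicator₀ ht]
  exact integral_mono (hf.indicator₀ hs) (hf.indicator₀ ht) h

end

theorem stmt_0_general {Ω : Type*} [MeasurableSpace Ω] (P : Measure Ω) [IsProbabilityMeasure P]
    (W T : Ω → ℝ) (hTmeas : Measurable T)
    (hWint : Integrable W P) (hindep : IndepFun W T P)
    (hmean : ∫ ω, W ω ∂P = 0) :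
    (0 ≤ ∫ ω in {ω | T ω ≤ W ω}, W ω ∂P) ∧ (∫ ω in {ω | W ω ≤ T ω}, W ω ∂P ≤ 0) := by
  have hzero {B : Set ℝ} (hB : MeasurableSet B) : ∫ ω in T ⁻¹' B, W ω ∂P = 0 := by
    rw [hindep.setIntegral_preimage_eq_mul_measureReal hWint.1 hTmeas hB, hmean, zero_mul]
  have hW : AEMeasurable W P := hWint.aemeasurable
  have hT : AEMeasurable T P := hTmeas.aemeasurable
  constructor
  · calc (0 : ℝ) = ∫ ω in T ⁻¹' Set.Iic 0, W ω ∂P := (hzero measurableSet_Iic).symm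
      _ ≤ ∫ ω in {ω | T ω ≤ W ω}, W ω ∂P := by
        refine setIntegral_le_setIntegral_of_indicator_le hWint
          (hTmeas measurableSet_Iic).nullMeasurableSet (nullMeasurableSet_le hT hW) fun ω => ?_
        simp only [Set.indicator, Set.mem_preimage, Set.mem_Iic, Set.mem_ofPred_eq]
        split_ifs <;> linarith
  · calc ∫ ω in {ω | W ω ≤ T ω}, W ω ∂P ≤ ∫ ω in T ⁻¹' Set.Ici 0, W ω ∂P := by
          refine setIntegral_le_setIntegral_of_indicator_le hWint (nullMeasurableSet_le hW hT)
            (hTmeas measurableSet_Ici).nullMeasurableSet fun ω => ?_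
          simp only [Set.indicator, Set.mem_preimage, Set.mem_Ici, Set.mem_ofPred_eq]
          split_ifs <;> linarith
      _ = 0 := hzero measurableSet_Ici

/-- If `W` is integrable, independent of `T`, and `E[W] = 0`, then
`E[W · 1{W ≥ T}] ≥ 0` and `E[W · 1{W ≤ T}] ≤ 0`. -/
theorem stmt_0 {Ω : Type*} [MeasurableSpace Ω] (P : Measure Ω) [IsProbabilityMeasure P]
    (W T : Ω → ℝ) (hWmeas : Measurable W) (hTmeas : Measurable T)
    (hWint : Integrable W P) (hindep : IndepFun W T P)
    (hmean : ∫ ω, W ω ∂P = 0) :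
    (0 ≤ ∫ ω in {ω | T ω ≤ W ω}, W ω ∂P) ∧ (∫ ω in {ω | W ω ≤ T ω}, W ω ∂P ≤ 0) :=
  stmt_0_general P W T hTmeas hWint hindep hmean
end

section
/- Under the Selection model, let M := (A − Price + ρ·u)/σ. Then almost surely E[ S·(1 − Φ(M))/Φ(M) − (1 − S) | σ(Z) ] ≥ 0. -/
/-!
Given `W = (Z, u)` the index `V = A - Price + ρ u` is known while `ξ ~ N(0, σ²)` is independent
of `W`, so the selection probability given `W` is the probit `Φ(V / σ)`. The odds expression
equals `S / Φ(V / σ) - 1`, whose integral over any `W`-measurable event therefore vanishes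
(inverse probability weighting). Events of `σ(Z) ⊆ σ(Z, u)` are among them, so the conditional
expectation given `Z` is in fact `0` almost surely.
-/

open MeasureTheory ProbabilityTheory

/-- Standard normal density. -/
noncomputable def phi (x : ℝ) : ℝ := (Real.sqrt (2 * Real.pi))⁻¹ * Real.exp (-x ^ 2 / 2)

/-- Standard normal CDF. -/
noncomputable def Phi (x : ℝ) : ℝ := ∫ s in Set.Iic x, phi s

/-- Standard normal hazard function (inverse Mills ratio). -/
noncomputable def lam (x : ℝ) : ℝ := phi x / (1 - Phi x)

/-- Mills-ratio-type function `φ(x)/Φ(x)`. -/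
noncomputable def mills (x : ℝ) : ℝ := phi x / Phi x

open Set
open scoped ENNReal

lemma phi_eq_gaussianPDFReal : phi = gaussianPDFReal 0 1 := by
  ext x
  simp [phi, gaussianPDFReal]

lemma phi_pos (x : ℝ) : 0 < phi x := by
  rw [phi]
  positivity

lemma integrable_phi : Integrable phi :=
  phi_eq_gaussianPDFReal ▸ integrable_gaussianPDFReal 0 1

lemma Phi_pos (x : ℝ) : 0 < Phi x := by
  rw [Phi, setIntegral_pos_iff_support_of_nonneg_ae (ae_of_all _ fun y => (phi_pos y).le)
    integrable_phi.integrableOn, Function.support_eq_univ fun y => (phi_pos y).ne']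
  simp

lemma Phi_monotone : Monotone Phi := fun _ _ hab =>
  setIntegral_mono_set integrable_phi.integrableOn (ae_of_all _ fun y => (phi_pos y).le)
    (Iic_subset_Iic.2 hab).eventuallyLE

lemma measurable_Phi : Measurable Phi := Phi_monotone.measurable

lemma gaussianReal_Iic (x : ℝ) : gaussianReal 0 1 (Iic x) = ENNReal.ofReal (Phi x) := by
  rw [gaussianReal_apply_eq_integral 0 one_ne_zero, ← phi_eq_gaussianPDFReal, Phi]

lemma gaussianReal_Ici_neg {σ : ℝ} (hσ : 0 < σ) (c : ℝ) :
    gaussianReal 0 (σ ^ 2).toNNReal (Ici (-c)) = ENNReal.ofReal (Phi (c / σ)) := by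
  have hmap : (gaussianReal 0 1).map ((-σ) * ·) = gaussianReal 0 (σ ^ 2).toNNReal := by
    rw [gaussianReal_map_const_mul, mul_zero, mul_one]
    congr 1
    ext
    simp [sq_nonneg]
  have hpre : ((-σ) * ·) ⁻¹' Ici (-c) = Iic (c / σ) := by
    ext x
    simp only [mem_preimage, mem_Ici, mem_Iic, le_div_iff₀ hσ]
    constructor <;> intro h <;> linarith
  rw [← hmap, Measure.map_apply (measurable_const_mul _) measurableSet_Ici, hpre,
    gaussianReal_Iic]

lemma lintegral_comp_prodMk_of_indepFun {Ω β γ : Type*} [MeasurableSpace Ω] [MeasurableSpace β]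
    [MeasurableSpace γ] {P : Measure Ω} [IsFiniteMeasure P] {T : Ω → β} {ξ : Ω → γ}
    (hT : Measurable T) (hξ : Measurable ξ) (hind : IndepFun T ξ P)
    {G : β × γ → ℝ≥0∞} (hG : Measurable G) :
    ∫⁻ ω, G (T ω, ξ ω) ∂P = ∫⁻ ω, ∫⁻ x, G (T ω, x) ∂(P.map ξ) ∂P := by
  rw [← lintegral_map hG (hT.prodMk hξ),
    (indepFun_iff_map_prod_eq_prod_map_map hT.aemeasurable hξ.aemeasurable).1 hind,
    lintegral_prod _ hG.aemeasurable, lintegral_map hG.lintegral_prod_right' hT]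

noncomputable def selectionIndicator {Ω : Type*} (V ξ : Ω → ℝ) (ω : Ω) : ℝ :=
  if 0 ≤ V ω + ξ ω then 1 else 0

lemma selectionIndicator_nonneg {Ω : Type*} (V ξ : Ω → ℝ) (ω : Ω) :
    0 ≤ selectionIndicator V ξ ω := by
  unfold selectionIndicator
  split_ifs <;> norm_num

lemma measurable_selectionIndicator {Ω : Type*} [MeasurableSpace Ω] {V ξ : Ω → ℝ}
    (hV : Measurable V) (hξ : Measurable ξ) :
    Measurable (selectionIndicator V ξ) :=
  Measurable.ite (measurableSet_le measurable_const (hV.add hξ)) measurable_const measurable_const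

section Selection

variable {Ω α : Type*} [MeasurableSpace Ω] {P : Measure Ω} [IsFiniteMeasure P]
  [MeasurableSpace α] {W : Ω → α} {ξ V Y : Ω → ℝ} {σ : ℝ}

lemma lintegral_selectionIndicator_mul (hW : Measurable W) (hξ : Measurable ξ) (hσ : 0 < σ)
    (hind : IndepFun ξ W P) (hlaw : P.map ξ = gaussianReal 0 (σ ^ 2).toNNReal)
    (hV : Measurable[MeasurableSpace.comap W inferInstance] V)
    (hY : Measurable[MeasurableSpace.comap W inferInstance] Y) :
    ∫⁻ ω, ENNReal.ofReal (selectionIndicator V ξ ω * Y ω) ∂P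
      = ∫⁻ ω, ENNReal.ofReal (Phi (V ω / σ) * Y ω) ∂P := by
  have hVY : Measurable[MeasurableSpace.comap W inferInstance] fun ω => (V ω, Y ω) :=
    hV.prodMk hY
  have hind' : IndepFun (fun ω => (V ω, Y ω)) ξ P :=
    (indep_of_indep_of_le_right hind (measurable_iff_comap_le.1 hVY)).symm
  have hG : Measurable fun p : (ℝ × ℝ) × ℝ =>
      ENNReal.ofReal (selectionIndicator (fun p => p.1.1) Prod.snd p * p.1.2) :=
    ENNReal.measurable_ofReal.comp
      ((measurable_selectionIndicator (by fun_prop) measurable_snd).mul (by fun_prop))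
  have hinner (v y : ℝ) :
      ∫⁻ x, ENNReal.ofReal ((if 0 ≤ v + x then (1 : ℝ) else 0) * y)
          ∂(gaussianReal 0 (σ ^ 2).toNNReal) = ENNReal.ofReal (Phi (v / σ) * y) := by
    have hindicator : (fun x => ENNReal.ofReal ((if 0 ≤ v + x then (1 : ℝ) else 0) * y))
        = (Ici (-v)).indicator fun _ => ENNReal.ofReal y := by
      ext x
      by_cases h : 0 ≤ v + x <;> simp [h, indicator, neg_le_iff_add_nonneg']
    rw [hindicator, lintegral_indicator_const measurableSet_Ici, gaussianReal_Ici_neg hσ,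
      ENNReal.ofReal_mul (Phi_pos _).le, mul_comm]
  refine (lintegral_comp_prodMk_of_indepFun (hVY.mono hW.comap_le le_rfl) hξ hind' hG).trans ?_
  rw [hlaw]
  exact lintegral_congr fun ω => hinner (V ω) (Y ω)

/-- No integrability is assumed: both sides are `toReal` of the same, possibly infinite,
lintegral. -/
lemma integral_selectionIndicator_mul (hW : Measurable W) (hξ : Measurable ξ) (hσ : 0 < σ)
    (hind : IndepFun ξ W P) (hlaw : P.map ξ = gaussianReal 0 (σ ^ 2).toNNReal)
    (hV : Measurable[MeasurableSpace.comap W inferInstance] V)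
    (hY : Measurable[MeasurableSpace.comap W inferInstance] Y) (hY0 : 0 ≤ Y) :
    ∫ ω, selectionIndicator V ξ ω * Y ω ∂P = ∫ ω, Phi (V ω / σ) * Y ω ∂P := by
  have hV' := hV.mono hW.comap_le le_rfl
  have hY' := hY.mono hW.comap_le le_rfl
  rw [integral_eq_lintegral_of_nonneg_ae
      (ae_of_all _ fun ω => mul_nonneg (selectionIndicator_nonneg V ξ ω) (hY0 ω))
      ((measurable_selectionIndicator hV' hξ).mul hY').aestronglyMeasurable,
    integral_eq_lintegral_of_nonneg_ae
      (ae_of_all _ fun ω => mul_nonneg (Phi_pos _).le (hY0 ω))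
      ((measurable_Phi.comp (hV'.div_const σ)).mul hY').aestronglyMeasurable,
    lintegral_selectionIndicator_mul hW hξ hσ hind hlaw hV hY]

lemma integrable_selectionIndicator_mul (hW : Measurable W) (hξ : Measurable ξ) (hσ : 0 < σ)
    (hind : IndepFun ξ W P) (hlaw : P.map ξ = gaussianReal 0 (σ ^ 2).toNNReal)
    (hV : Measurable[MeasurableSpace.comap W inferInstance] V)
    (hY : Measurable[MeasurableSpace.comap W inferInstance] Y) (hY0 : 0 ≤ Y)
    (hint : Integrable (fun ω => Phi (V ω / σ) * Y ω) P) :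
    Integrable (fun ω => selectionIndicator V ξ ω * Y ω) P := by
  refine ⟨((measurable_selectionIndicator (hV.mono hW.comap_le le_rfl) hξ).mul
    (hY.mono hW.comap_le le_rfl)).aestronglyMeasurable, ?_⟩
  rw [hasFiniteIntegral_iff_ofReal
      (ae_of_all _ fun ω => mul_nonneg (selectionIndicator_nonneg V ξ ω) (hY0 ω)),
    lintegral_selectionIndicator_mul hW hξ hσ hind hlaw hV hY,
    ← hasFiniteIntegral_iff_ofReal (ae_of_all _ fun ω => mul_nonneg (Phi_pos _).le (hY0 ω))]
  exact hint.hasFiniteIntegral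

lemma integrable_selectionIndicator_div_Phi (hW : Measurable W) (hξ : Measurable ξ) (hσ : 0 < σ)
    (hind : IndepFun ξ W P) (hlaw : P.map ξ = gaussianReal 0 (σ ^ 2).toNNReal)
    (hV : Measurable[MeasurableSpace.comap W inferInstance] V) :
    Integrable (fun ω => selectionIndicator V ξ ω / Phi (V ω / σ)) P := by
  have hΦY : (fun ω => Phi (V ω / σ) * (Phi (V ω / σ))⁻¹) = fun _ => (1 : ℝ) :=
    funext fun ω => mul_inv_cancel₀ (Phi_pos _).ne'
  exact integrable_selectionIndicator_mul hW hξ hσ hind hlaw hV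
    (measurable_Phi.comp (hV.div_const σ)).inv (fun ω => (inv_pos.2 (Phi_pos _)).le)
    (hΦY ▸ integrable_const 1)

lemma setIntegral_selectionIndicator_div_Phi (hW : Measurable W) (hξ : Measurable ξ)
    (hσ : 0 < σ) (hind : IndepFun ξ W P) (hlaw : P.map ξ = gaussianReal 0 (σ ^ 2).toNNReal)
    (hV : Measurable[MeasurableSpace.comap W inferInstance] V) {s : Set Ω}
    (hs : MeasurableSet[MeasurableSpace.comap W inferInstance] s) :
    ∫ ω in s, selectionIndicator V ξ ω / Phi (V ω / σ) ∂P = P.real s := by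
  set Y := s.indicator fun ω => (Phi (V ω / σ))⁻¹
  have hY : Measurable[MeasurableSpace.comap W inferInstance] Y :=
    (measurable_Phi.comp (hV.div_const σ)).inv.indicator hs
  have hY0 : 0 ≤ Y := indicator_nonneg fun ω _ => (inv_pos.2 (Phi_pos _)).le
  calc ∫ ω in s, selectionIndicator V ξ ω / Phi (V ω / σ) ∂P
      = ∫ ω, selectionIndicator V ξ ω * Y ω ∂P := by
        rw [← integral_indicator (hW.comap_le s hs)]
        congr 1 with ω
        by_cases hω : ω ∈ s <;> simp [Y, hω, div_eq_mul_inv]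
    _ = ∫ ω, Phi (V ω / σ) * Y ω ∂P :=
        integral_selectionIndicator_mul hW hξ hσ hind hlaw hV hY hY0
    _ = ∫ ω, s.indicator 1 ω ∂P := by
        congr 1 with ω
        by_cases hω : ω ∈ s <;> simp [Y, hω, (Phi_pos _).ne']
    _ = P.real s := integral_indicator_one (hW.comap_le s hs)

end Selection

theorem condExp_selectionIndicator_odds_ae_eq_zero {Ω α : Type*} {m mΩ : MeasurableSpace Ω}
    {P : Measure Ω} [IsFiniteMeasure P] [MeasurableSpace α] {W : Ω → α} {ξ V : Ω → ℝ}
    {σ : ℝ} (hW : Measurable W) (hξ : Measurable ξ) (hσ : 0 < σ) (hind : IndepFun ξ W P)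
    (hlaw : P.map ξ = gaussianReal 0 (σ ^ 2).toNNReal)
    (hV : Measurable[MeasurableSpace.comap W inferInstance] V)
    (hm : m ≤ MeasurableSpace.comap W inferInstance) :
    P[fun ω => selectionIndicator V ξ ω * (1 - Phi (V ω / σ)) / Phi (V ω / σ)
        - (1 - selectionIndicator V ξ ω) | m] =ᵐ[P] 0 := by
  have hodds : (fun ω => selectionIndicator V ξ ω * (1 - Phi (V ω / σ)) / Phi (V ω / σ)
      - (1 - selectionIndicator V ξ ω))
        = fun ω => selectionIndicator V ξ ω / Phi (V ω / σ) - 1 := by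
    ext ω
    field_simp [(Phi_pos (V ω / σ)).ne']
    ring
  have hint := integrable_selectionIndicator_div_Phi hW hξ hσ hind hlaw hV
  rw [hodds]
  refine (ae_eq_condExp_of_forall_setIntegral_eq (hm.trans hW.comap_le) (hint.sub
    (integrable_const 1)) (fun _ _ _ => integrableOn_zero) (fun s hs _ => ?_)
    aestronglyMeasurable_const).symm
  simp only [Pi.sub_apply, integral_zero]
  rw [integral_sub hint.integrableOn (integrable_const 1).integrableOn,
    setIntegral_selectionIndicator_div_Phi hW hξ hσ hind hlaw hV (hm s hs), setIntegral_const]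
  simp

theorem stmt_11_general
    {Ω : Type*} [MeasurableSpace Ω] (P : Measure Ω) [IsProbabilityMeasure P]
    {k : ℕ} (Z : Ω → (Fin k → ℝ)) (hZmeas : Measurable Z)
    (A B u ξ : Ω → ℝ)
    (hAZ : Measurable[MeasurableSpace.comap Z inferInstance] A)
    (hBZ : Measurable[MeasurableSpace.comap Z inferInstance] B)
    (humeas : Measurable u) (hξmeas : Measurable ξ)
    (σ ρ : ℝ) (hσ : 0 < σ)
    (hξindep : IndepFun ξ (fun ω => (Z ω, u ω)) P)
    (hξlaw : Measure.map ξ P = gaussianReal 0 (Real.toNNReal (σ ^ 2)))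
    (Price S : Ω → ℝ)
    (hPrice : Price = fun ω => B ω + u ω)
    (hS : S = fun ω => if 0 ≤ A ω - Price ω + ρ * u ω + ξ ω then (1 : ℝ) else 0)
     :
    0 ≤ᵐ[P] P[fun ω => S ω * (1 - Phi ((A ω - Price ω + ρ * u ω) / σ)) / Phi ((A ω - Price ω + ρ * u ω) / σ)
        - (1 - S ω)
      | MeasurableSpace.comap Z inferInstance] := by
  subst hPrice hS
  have hZW : Measurable[MeasurableSpace.comap (fun ω => (Z ω, u ω)) inferInstance] Z :=
    measurable_fst.comp (comap_measurable _)
  have huW : Measurable[MeasurableSpace.comap (fun ω => (Z ω, u ω)) inferInstance] u :=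
    measurable_snd.comp (comap_measurable _)
  have hZW_le := measurable_iff_comap_le.1 hZW
  have hVW : Measurable[MeasurableSpace.comap (fun ω => (Z ω, u ω)) inferInstance]
      fun ω => A ω - (B ω + u ω) + ρ * u ω :=
    ((hAZ.mono hZW_le le_rfl).sub ((hBZ.mono hZW_le le_rfl).add huW)).add (huW.const_mul ρ)
  exact (condExp_selectionIndicator_odds_ae_eq_zero (hZmeas.prodMk humeas) hξmeas hσ hξindep
    hξlaw hVW hZW_le).symm.le

/-- First odds-based moment inequality (ob1_rho). -/
theorem stmt_11
    {Ω : Type*} [MeasurableSpace Ω] (P : Measure Ω) [IsProbabilityMeasure P]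
    {k : ℕ} (Z : Ω → (Fin k → ℝ)) (hZmeas : Measurable Z)
    (A B u ξ : Ω → ℝ)
    (hAint : Integrable A P) (hBint : Integrable B P) (huint : Integrable u P)
    (hAZ : Measurable[MeasurableSpace.comap Z inferInstance] A)
    (hBZ : Measurable[MeasurableSpace.comap Z inferInstance] B)
    (humeas : Measurable u) (hξmeas : Measurable ξ)
    (huZ : P[u | MeasurableSpace.comap Z inferInstance] =ᵐ[P] 0)
    (σ ρ : ℝ) (hσ : 0 < σ)
    (hξindep : IndepFun ξ (fun ω => (Z ω, u ω)) P)
    (hξlaw : Measure.map ξ P = gaussianReal 0 (Real.toNNReal (σ ^ 2)))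
    (Price S : Ω → ℝ)
    (hPrice : Price = fun ω => B ω + u ω)
    (hS : S = fun ω => if 0 ≤ A ω - Price ω + ρ * u ω + ξ ω then (1 : ℝ) else 0)
     :
    0 ≤ᵐ[P] P[fun ω => S ω * (1 - Phi ((A ω - Price ω + ρ * u ω) / σ)) / Phi ((A ω - Price ω + ρ * u ω) / σ)
        - (1 - S ω)
      | MeasurableSpace.comap Z inferInstance] :=
  stmt_11_general P Z hZmeas A B u ξ hAZ hBZ humeas hξmeas σ ρ hσ hξindep hξlaw Price S hPrice hS
end
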